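/- arXiv:2206.14613 — 2 statements merged into one kernel-verified Lean document; each statement's English description precedes it below -/
import Mathlib

section
/- Let q = 2^m with m odd and k a positive integer with gcd(k, q+1) = 1, and let F(x) = x^(k(q-1)) on F_{q^2}. Then the equation F(x+1) + F(x) = 1 has exactly 4 solutions in F_{q^2}, namely 0, 1, w, w^2, where w is a primitive cube root of unity in F_{q^2}. -/
/-!
Write `q = 2 ^ m`. For `x ≠ 0, 1` put `u = x ^ (q - 1)` and `v = (x + 1) ^ (q - 1)`. Both lie on the
circle `z ^ (q + 1) = 1`, on which `z ^ q = z⁻¹` and `z ↦ z ^ k` is injective. The equation reads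
`v ^ k + u ^ k = 1`, and applying `z ↦ z ^ q` to `v ^ k = u ^ k + 1` forces `u ^ k`, hence `u`, to
be a primitive cube root of unity with `v = u⁻¹ = u + 1`. Then `x ^ q = u x` and
`(x + 1) ^ q = v (x + 1)` give `x = u`. Conversely a primitive cube root `x` satisfies
`x + 1 = x ^ 2`, and `x ^ (k (q - 1))` is again a primitive cube root because `3 ∤ k (q - 1)`.
-/

open Polynomial

lemma Nat.coprime_three_mul_two_pow_sub_one {m k : ℕ} (hm : Odd m) (hk : k.Coprime (2 ^ m + 1)) :
    Nat.Coprime 3 (k * (2 ^ m - 1)) := by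
  have h3 : 3 ∣ 2 ^ m + 1 := by simpa using hm.nat_add_dvd_pow_add_pow 2 1
  refine Nat.Coprime.mul_right (hk.symm.coprime_dvd_left h3) ?_
  rw [Nat.Prime.coprime_iff_not_dvd Nat.prime_three]
  generalize 2 ^ m = q at *
  omega

lemma IsPrimitiveRoot.pow_three_eq_one_iff {K : Type*} [CommRing K] [IsDomain K] {ζ x : K}
    (hζ : IsPrimitiveRoot ζ 3) : x ^ 3 = 1 ↔ x = 1 ∨ x = ζ ∨ x = ζ ^ 2 := by
  constructor
  · intro hx
    obtain ⟨i, hi, rfl⟩ := hζ.eq_pow_of_pow_eq_one hx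
    interval_cases i <;> simp
  · rintro (rfl | rfl | rfl)
    · exact one_pow 3
    · exact hζ.pow_eq_one
    · rw [← pow_mul, mul_comm, pow_mul, hζ.pow_eq_one, one_pow]

lemma sq_add_self_add_one_eq_zero {K : Type*} [Field K] {x : K} (h3 : x ^ 3 = 1) (h1 : x ≠ 1) :
    x ^ 2 + x + 1 = 0 :=
  mul_left_cancel₀ (sub_ne_zero.2 h1) (by linear_combination h3)

section CharTwo

variable {K : Type*} [Field K] [CharP K 2]

lemma sq_add_self_add_one_eq_zero_of_add_eq_one {n : ℕ} {a b : K} (ha : a ^ (2 ^ n + 1) = 1)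
    (hb : b ^ (2 ^ n + 1) = 1) (hab : a + b = 1) : b ^ 2 + b + 1 = 0 := by
  have h2 : (2 : K) = 0 := CharTwo.two_eq_zero
  have ha' : a = b + 1 := by linear_combination hab - b * h2
  have hfrob : a ^ 2 ^ n = b ^ 2 ^ n + 1 := by rw [ha', add_pow_char_pow, one_pow]
  rw [pow_succ] at ha hb
  rw [hfrob, ha'] at ha
  linear_combination b * (ha - hb) - hb

lemma sq_add_self_add_one_eq_zero_and_mul_eq_one {n k : ℕ} {u v : K}
    (hu : u ^ (2 ^ n + 1) = 1) (hv : v ^ (2 ^ n + 1) = 1) (hk : k.Coprime (2 ^ n + 1))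
    (h : v ^ k + u ^ k = 1) : u ^ 2 + u + 1 = 0 ∧ v * u = 1 := by
  have h2 : (2 : K) = 0 := CharTwo.two_eq_zero
  have hb : (u ^ k) ^ 2 + u ^ k + 1 = 0 :=
    sq_add_self_add_one_eq_zero_of_add_eq_one (by rw [pow_right_comm, hv, one_pow])
      (by rw [pow_right_comm, hu, one_pow]) h
  have hu3 : u ^ 3 = 1 := (pow_eq_one_iff_of_coprime hk).1
    ⟨by rw [pow_right_comm]; linear_combination (u ^ k - 1) * hb,
      by rw [pow_right_comm, hu, one_pow]⟩
  have hu1 : u ≠ 1 := by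
    rintro rfl
    rw [one_pow] at hb
    exact one_ne_zero (by linear_combination hb - h2)
  refine ⟨sq_add_self_add_one_eq_zero hu3 hu1, (pow_eq_one_iff_of_coprime hk).1 ⟨?_, ?_⟩⟩
  · rw [mul_pow]
    linear_combination u ^ k * h - hb + u ^ k * h2
  · rw [mul_pow, hu, hv, one_mul]

lemma pow_sub_one_pow_add_one_eq_one {F : Type*} [GroupWithZero F] [Fintype F] {q : ℕ}
    (hcard : Fintype.card F = q ^ 2) {y : F} (hy : y ≠ 0) : (y ^ (q - 1)) ^ (q + 1) = 1 := by
  have hexp : (q - 1) * (q + 1) = Fintype.card F - 1 := by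
    rw [hcard, mul_comm, ← Nat.sq_sub_sq, one_pow]
  rw [← pow_mul, hexp]
  exact FiniteField.pow_card_sub_one_eq_one y hy

lemma eq_zero_or_pow_three_eq_one [Fintype K] {n k : ℕ} (hcard : Fintype.card K = (2 ^ n) ^ 2)
    (hk : k.Coprime (2 ^ n + 1)) {x : K}
    (h : (x + 1) ^ (k * (2 ^ n - 1)) + x ^ (k * (2 ^ n - 1)) = 1) : x = 0 ∨ x ^ 3 = 1 := by
  have h2 : (2 : K) = 0 := CharTwo.two_eq_zero
  by_cases hx0 : x = 0
  · exact Or.inl hx0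
  by_cases hx1 : x = 1
  · exact Or.inr (by rw [hx1, one_pow])
  have hx1' : x + 1 ≠ 0 := fun h' => hx1 (by linear_combination h' - h2)
  set u := x ^ (2 ^ n - 1)
  set v := (x + 1) ^ (2 ^ n - 1)
  obtain ⟨hu2, hvu⟩ := sq_add_self_add_one_eq_zero_and_mul_eq_one
    (pow_sub_one_pow_add_one_eq_one hcard hx0) (pow_sub_one_pow_add_one_eq_one hcard hx1') hk
    (by simpa only [← pow_mul'] using h)
  have hfrob : v * (x + 1) = u * x + 1 := by
    simp only [u, v, pow_sub_one_mul (pow_ne_zero n two_ne_zero), add_pow_char_pow, one_pow]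
  have hv : v = u + 1 := by linear_combination v * hu2 - (u + 1) * hvu - (u + 1) * h2
  have hxu : x = u := by linear_combination hfrob - (x + 1) * hv - u * h2
  right
  rw [hxu]
  linear_combination (u - 1) * hu2

lemma add_one_pow_add_pow_eq_one {e : ℕ} (he0 : e ≠ 0) (he : Nat.Coprime 3 e) {x : K}
    (hx : x = 0 ∨ x ^ 3 = 1) : (x + 1) ^ e + x ^ e = 1 := by
  have h2 : (2 : K) = 0 := CharTwo.two_eq_zero
  rcases hx with rfl | hx3
  · simp [he0]
  by_cases hx1 : x = 1
  · rw [hx1, CharTwo.add_self_eq_zero, zero_pow he0, one_pow, zero_add]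
  have hx2 := sq_add_self_add_one_eq_zero hx3 hx1
  have hx' : x + 1 = x ^ 2 := by linear_combination -hx2 + (x + 1) * h2
  have ht3 : (x ^ e) ^ 3 = 1 := by rw [pow_right_comm, hx3, one_pow]
  have ht1 : x ^ e ≠ 1 := fun ht => hx1 ((pow_eq_one_iff_of_coprime he).1 ⟨hx3, ht⟩)
  rw [hx', pow_right_comm]
  linear_combination sq_add_self_add_one_eq_zero ht3 ht1 - h2

end CharTwo

theorem stmt_7_general (m q k : ℕ) (hmodd : Odd m) (hq : q = 2 ^ m)
    (hk : 0 < k) (hgcd : Nat.gcd k (q + 1) = 1)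
    (K : Type*) [Field K] [Fintype K] [DecidableEq K] (hcard : Fintype.card K = q ^ 2)
    (w : K) (hw3 : w ^ 3 = 1) (hw1 : w ≠ 1) :
    (Finset.univ.filter
        (fun x : K => (x + 1) ^ (k * (q - 1)) + x ^ (k * (q - 1)) = 1)).card = 4 ∧
    ∀ x : K, (x + 1) ^ (k * (q - 1)) + x ^ (k * (q - 1)) = 1 ↔
      (x = 0 ∨ x = 1 ∨ x = w ∨ x = w ^ 2) := by
  subst hq
  have : CharP K 2 := ringChar.of_eq <| FiniteField.even_card_iff_char_two.2 <| by
    simp [hcard, Nat.pow_mod, hmodd.pos.ne']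
  have hsol (x : K) : (x + 1) ^ (k * (2 ^ m - 1)) + x ^ (k * (2 ^ m - 1)) = 1 ↔
      x = 0 ∨ x ^ 3 = 1 :=
    ⟨eq_zero_or_pow_three_eq_one hcard hgcd,
      add_one_pow_add_pow_eq_one
        (Nat.mul_ne_zero hk.ne' (Nat.sub_ne_zero_of_lt (Nat.one_lt_two_pow hmodd.pos.ne')))
        (Nat.coprime_three_mul_two_pow_sub_one hmodd hgcd)⟩
  have hw : IsPrimitiveRoot w 3 :=
    isPrimitiveRoot_of_mem_nthRootsFinset Nat.prime_three (by simpa using hw3) hw1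
  refine ⟨?_, fun x => by rw [hsol, hw.pow_three_eq_one_iff]⟩
  have hfilter : Finset.univ.filter (fun x : K => (x + 1) ^ (k * (2 ^ m - 1)) +
      x ^ (k * (2 ^ m - 1)) = 1) = insert 0 (nthRootsFinset 3 (1 : K)) := by
    ext x
    simp [hsol]
  rw [hfilter, Finset.card_insert_of_notMem (by simp), hw.card_nthRootsFinset]

/-- Let `q = 2^m` with `m` odd, `k > 0` with `gcd(k, q+1) = 1`, `K` the field with
`q^2` elements and `F x = x^(k(q-1))`. Then for any primitive cube root of unity
`w ∈ K`, the equation `F(x+1) + F(x) = 1` has exactly `4` solutions in `K`, namely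
`0, 1, w, w^2`. -/
theorem stmt_7 (m q k : ℕ) (hm : 0 < m) (hmodd : Odd m) (hq : q = 2 ^ m)
    (hk : 0 < k) (hgcd : Nat.gcd k (q + 1) = 1)
    (K : Type*) [Field K] [Fintype K] [DecidableEq K] (hcard : Fintype.card K = q ^ 2)
    (w : K) (hw3 : w ^ 3 = 1) (hw1 : w ≠ 1) :
    (Finset.univ.filter
        (fun x : K => (x + 1) ^ (k * (q - 1)) + x ^ (k * (q - 1)) = 1)).card = 4 ∧
    ∀ x : K, (x + 1) ^ (k * (q - 1)) + x ^ (k * (q - 1)) = 1 ↔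
      (x = 0 ∨ x = 1 ∨ x = w ∨ x = w ^ 2) :=
  stmt_7_general m q k hmodd hq hk hgcd K hcard w hw3 hw1
end

section
/- Let q = 2^m with m even and k a positive integer with gcd(k, q+1) = 1, and let F(x) = x^(k(q-1)) on F_{q^2}. Then the boomerang uniformity of F is 2; more precisely, for every b ∈ F_{q^2}^*, the system F(x) + F(y) = b, F(x+1) + F(y+1) = b has either 0 or 2 solutions (x,y) ∈ F_{q^2}^2, and it has exactly 2 solutions for exactly 2^(2m-1) - 2^(m-1) + 1 values of b. -/
/-!
Write `q = 2 ^ m`, `F x = x ^ (k * (q - 1))` and `U = {u | u ^ (q + 1) = 1}` for the unit circle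
of `𝔽_{q²}`. On `𝔽_q` the map `F` takes the value `0` at `0` and `1` elsewhere. Off `𝔽_q`,
`x ↦ (x ^ (q - 1), (x + 1) ^ (q - 1))` is a bijection onto the pairs of distinct points of
`U \ {1}`, with inverse `(u, v) ↦ (v + 1) / (u + v)`; as `gcd(k, q + 1) = 1`, raising to the
`k`-th power permutes these pairs, so `x ↦ (F x, F (x + 1))` is such a bijection as well.

Adding the two equations shows that `F x + F (x + 1) = F y + F (y + 1)` for a solution `(x, y)`.
This sum lies in `{0, 1}` exactly on `𝔽_q`: off `𝔽_q` it is the sum of two distinct points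
of `U`, and `U` contains no `a` with `a + 1 ∈ U` because `m` is even. So either both `x, y` lie
in `𝔽_q`, which forces `b = 1` and `{x, y} = {0, 1}`, or neither does. In the latter case the
points `a`, `a'` of `U` whose translates by `g` stay in `U` are the roots of one quadratic, so
`a' ∈ {a, a + g}`; hence `(F y, F (y + 1)) = (F (x + 1), F x)`, and for `b ≠ 0, 1` the solutions
correspond to the pairs `(a, c)` above with `a + c = b`. There are `0` or `2` of them, so the
`q (q - 1)` pairs produce `q (q - 1) / 2` values of `b`, to which `b = 1` is added.
-/

open Finset Polynomial

theorem eq_of_pow_eq_pow_of_coprime {G₀ : Type*} [CommGroupWithZero G₀] {n k : ℕ}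
    (hk : k.Coprime n) {u v : G₀} (hu : u ^ n = 1) (hv : v ^ n = 1) (h : u ^ k = v ^ k) :
    u = v := by
  rcases Nat.eq_zero_or_pos n with rfl | hn
  · simpa [(Nat.coprime_zero_right k).mp hk] using h
  have hv0 : v ≠ 0 := by rintro rfl; simp [hn.ne'] at hv
  rw [← div_eq_one_iff_eq hv0, ← pow_eq_one_iff_of_coprime hk, div_pow, div_pow, h, hu, hv,
    div_self (pow_ne_zero _ hv0), div_one]
  exact ⟨rfl, rfl⟩

theorem exists_pow_eq_of_coprime {M : Type*} [Monoid M] {n k : ℕ} (hk : k.Coprime n) {a : M}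
    (ha : a ^ n = 1) : ∃ u, u ^ n = 1 ∧ u ^ k = a := by
  obtain ⟨j, hj⟩ :=
    exists_pow_eq_self_of_coprime (hk.coprime_dvd_right (orderOf_dvd_of_pow_eq_one ha))
  exact ⟨a ^ j, by rw [pow_right_comm, ha, one_pow], by rw [pow_right_comm, hj]⟩

theorem pow_eq_mul_iff_pow_sub_one_eq {G₀ : Type*} [MonoidWithZero G₀] [IsCancelMulZero G₀]
    {n : ℕ} (hn : n ≠ 0) {x u : G₀} (hx : x ≠ 0) : x ^ n = u * x ↔ x ^ (n - 1) = u := by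
  rw [← pow_sub_one_mul hn x, mul_left_inj' hx]

theorem FiniteField.card_nthRootsFinset_one {K : Type*} [Field K] [Fintype K] {n : ℕ}
    (hn : n ∣ Fintype.card K - 1) : #(nthRootsFinset n (1 : K)) = n := by
  obtain ⟨g, hg⟩ := IsCyclic.exists_ofOrder_eq_natCard (α := Kˣ)
  rw [Nat.card_units, Nat.card_eq_fintype_card] at hg
  have hg0 : orderOf g ≠ 0 := by have := Fintype.one_lt_card (α := K); omega
  have hζ : IsPrimitiveRoot ((g ^ (orderOf g / n) : Kˣ) : K) n := by
    have := IsPrimitiveRoot.orderOf ((g ^ (orderOf g / n) : Kˣ) : K)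
    rwa [orderOf_units, orderOf_pow_orderOf_div hg0 (hg ▸ hn)] at this
  exact hζ.card_nthRootsFinset

theorem FiniteField.pow_sub_one_pow_add_one_eq_one {K : Type*} [Field K] [Fintype K] {q : ℕ}
    (hK : Fintype.card K = q ^ 2) {x : K} (hx : x ≠ 0) : (x ^ (q - 1)) ^ (q + 1) = 1 := by
  rw [← pow_mul, mul_comm, ← one_pow 2, ← Nat.sq_sub_sq, one_pow, ← hK]
  exact FiniteField.pow_card_sub_one_eq_one x hx

theorem pow_mul_sub_one_of_pow_two_pow_eq_self {K : Type*} [Field K] [Fintype K] [DecidableEq K]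
    {m k : ℕ} (hK : Fintype.card K = (2 ^ m) ^ 2) (hk : k.Coprime (2 ^ m + 1)) {x : K}
    (hx : x ^ 2 ^ m = x) :
    x ^ (k * (2 ^ m - 1)) = if x = 0 then 0 else 1 := by
  split_ifs with hx0
  · have hk0 : k ≠ 0 := by rintro rfl; simp at hk
    have hq : 1 < 2 ^ m := by
      have := Fintype.one_lt_card (α := K)
      rw [hK] at this
      exact (Nat.one_lt_pow_iff two_ne_zero).mp this
    rw [hx0, zero_pow (mul_ne_zero hk0 (by omega))]
  · rw [pow_mul', (pow_eq_mul_iff_pow_sub_one_eq (by positivity) hx0).mp (by rw [one_mul, hx]),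
      one_pow]

section CharTwo

variable {K : Type*} [Field K] [CharP K 2] {m : ℕ}

theorem add_one_pow_two_pow (x : K) : (x + 1) ^ 2 ^ m = x ^ 2 ^ m + 1 := by
  rw [add_pow_char_pow, one_pow]

theorem mul_pow_sub_one_add_add_one_pow_sub_one (x : K) :
    x * (x ^ (2 ^ m - 1) + (x + 1) ^ (2 ^ m - 1)) = (x + 1) ^ (2 ^ m - 1) + 1 := by
  have hx := pow_sub_one_mul (M := K) (n := 2 ^ m) (by positivity) x
  have hx1 := pow_sub_one_mul (M := K) (n := 2 ^ m) (by positivity) (x + 1)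
  rw [add_one_pow_two_pow] at hx1
  linear_combination hx1 - hx +
    (x * x ^ (2 ^ m - 1) - (x + 1) ^ (2 ^ m - 1)) * CharTwo.two_eq_zero (R := K)

theorem quadratic_of_pow_eq_one {a g : K} (ha : a ^ (2 ^ m + 1) = 1)
    (hag : (a + g) ^ (2 ^ m + 1) = 1) : g ^ 2 ^ m * a ^ 2 + g ^ (2 ^ m + 1) * a + g = 0 := by
  rw [pow_succ, add_pow_char_pow] at hag
  rw [pow_succ] at ha ⊢
  linear_combination a * hag - (a + g) * ha

theorem eq_or_eq_add_of_pow_eq_one {a a' g : K} (hg : g ≠ 0)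
    (ha : a ^ (2 ^ m + 1) = 1) (hag : (a + g) ^ (2 ^ m + 1) = 1)
    (ha' : a' ^ (2 ^ m + 1) = 1) (hag' : (a' + g) ^ (2 ^ m + 1) = 1) :
    a' = a ∨ a' = a + g := by
  have h : g ^ 2 ^ m * ((a' - a) * (a' - (a + g))) = 0 := by
    linear_combination quadratic_of_pow_eq_one ha' hag' - quadratic_of_pow_eq_one ha hag
      - g ^ 2 ^ m * (a' - a) * (a + g) * CharTwo.two_eq_zero (R := K)
  simpa [sub_eq_zero, hg] using h

theorem eq_and_eq_of_add_eq_add {a c a' c' : K} (ha : a ^ (2 ^ m + 1) = 1)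
    (hc : c ^ (2 ^ m + 1) = 1) (ha' : a' ^ (2 ^ m + 1) = 1) (hc' : c' ^ (2 ^ m + 1) = 1)
    (hac : a ≠ c) (h0 : a + a' ≠ 0) (h : a + a' = c + c') : a' = c ∧ c' = a := by
  have hc'_eq : c' = a' + (a + c) := by
    linear_combination -h - c * CharTwo.two_eq_zero (R := K)
  rcases eq_or_eq_add_of_pow_eq_one (mt CharTwo.add_eq_zero.mp hac) ha
      (by rwa [CharTwo.add_cancel_left]) ha' (by rwa [← hc'_eq]) with ha'a | ha'c
  · exact absurd (by rw [ha'a, CharTwo.add_self_eq_zero]) h0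
  · rw [CharTwo.add_cancel_left] at ha'c
    rw [hc'_eq, ha'c, add_comm a c, CharTwo.add_cancel_left]
    exact ⟨rfl, rfl⟩

theorem add_one_pow_ne_one_of_pow_eq_one (hm : Even m) {a : K} (ha : a ^ (2 ^ m + 1) = 1) :
    (a + 1) ^ (2 ^ m + 1) ≠ 1 := by
  intro ha1
  have hquad : a ^ 2 + a + 1 = 0 := by simpa using quadratic_of_pow_eq_one ha ha1
  -- `a` is a primitive cube root of unity, while `2 ^ m + 1 ≡ 2 [MOD 3]` as `m` is even
  have hmod : 2 ^ m % 3 = 1 := by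
    obtain ⟨j, rfl⟩ := hm
    rw [← two_mul, pow_mul, Nat.pow_mod]
    norm_num
  have hsq : a ^ 2 = 1 := by
    rw [← ha, show 2 ^ m + 1 = 3 * (2 ^ m / 3) + 2 by omega, pow_add, pow_mul,
      show a ^ 3 = 1 by linear_combination (a - 1) * hquad, one_pow, one_mul]
  have : a = 0 := by linear_combination hquad - hsq - CharTwo.two_eq_zero (R := K)
  simp [this] at ha

theorem exists_pow_sub_one_eq {u v : K} (hu : u ^ (2 ^ m + 1) = 1) (hv : v ^ (2 ^ m + 1) = 1)
    (hu1 : u ≠ 1) (hv1 : v ≠ 1) (huv : u ≠ v) :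
    ∃ x : K, x ^ 2 ^ m ≠ x ∧ x ^ (2 ^ m - 1) = u ∧ (x + 1) ^ (2 ^ m - 1) = v := by
  have hq : 2 ^ m ≠ 0 := by positivity
  have hd : u + v ≠ 0 := mt CharTwo.add_eq_zero.mp huv
  have hu0 : u ≠ 0 := by rintro rfl; simp at hu
  have hv0 : v ≠ 0 := by rintro rfl; simp at hv
  have frob {w : K} (hw : w ^ (2 ^ m + 1) = 1) : w ^ 2 ^ m = w⁻¹ :=
    eq_inv_of_mul_eq_one_left (by rwa [← pow_succ])
  set x := (v + 1) / (u + v) with hx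
  have hx0 : x ≠ 0 := div_ne_zero (mt CharTwo.add_eq_zero.mp hv1) hd
  have hx1 : x + 1 ≠ 0 := by
    rw [hx, div_add_one hd]
    refine div_ne_zero (fun h => hu1 ?_) hd
    linear_combination h - (v + 1) * CharTwo.two_eq_zero (R := K)
  have hxq : x ^ 2 ^ m = u * x := by
    have hd' : v + u ≠ 0 := by rwa [add_comm]
    rw [hx, div_pow, add_pow_char_pow, add_pow_char_pow, one_pow, frob hu, frob hv]
    field_simp
    ring
  have hx1q : (x + 1) ^ 2 ^ m = v * (x + 1) := by
    rw [add_pow_char_pow, one_pow, hxq, hx]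
    field_simp
    linear_combination (u - v ^ 2) * CharTwo.two_eq_zero (R := K)
  refine ⟨x, fun h => hu1 ?_, (pow_eq_mul_iff_pow_sub_one_eq hq hx0).mp hxq,
    (pow_eq_mul_iff_pow_sub_one_eq hq hx1).mp hx1q⟩
  exact mul_right_cancel₀ hx0 (hxq.symm.trans (h.trans (one_mul x).symm))

end CharTwo

noncomputable def nthRootPairs (K : Type*) [Field K] [DecidableEq K] (n : ℕ) : Finset (K × K) :=
  ((nthRootsFinset n (1 : K)).erase 1).offDiag

section RootPairs

variable {K : Type*} [Field K] [DecidableEq K] {n : ℕ}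

theorem mem_nthRootPairs (hn : 0 < n) {a c : K} :
    (a, c) ∈ nthRootPairs K n ↔ (a ≠ 1 ∧ a ^ n = 1) ∧ (c ≠ 1 ∧ c ^ n = 1) ∧ a ≠ c := by
  simp [nthRootPairs, mem_nthRootsFinset hn]

theorem swap_mem_nthRootPairs {p : K × K} (hp : p ∈ nthRootPairs K n) :
    p.swap ∈ nthRootPairs K n := by
  obtain ⟨h1, h2, h12⟩ := mem_offDiag.mp hp
  exact mem_offDiag.mpr ⟨h2, h1, h12.symm⟩

theorem FiniteField.card_nthRootPairs [Fintype K] (hn : n ∣ Fintype.card K - 1) :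
    #(nthRootPairs K n) = (n - 1) * (n - 1) - (n - 1) := by
  have hn0 : 0 < n := Nat.pos_of_ne_zero <| by
    rintro rfl; have := Fintype.one_lt_card (α := K); simp at hn; omega
  rw [nthRootPairs, offDiag_card, card_erase_of_mem ((mem_nthRootsFinset hn0 _).mpr (one_pow n)),
    FiniteField.card_nthRootsFinset_one hn]

theorem bijOn_prodMap_pow_nthRootPairs {k : ℕ} (hn : 0 < n) (hk : k.Coprime n) :
    Set.BijOn (Prod.map (· ^ k) (· ^ k)) (nthRootPairs K n : Set (K × K)) (nthRootPairs K n) := by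
  have inj {u v : K} (hu : u ^ n = 1) (hv : v ^ n = 1) : u ^ k = v ^ k → u = v :=
    eq_of_pow_eq_pow_of_coprime hk hu hv
  have hpow {u : K} (hu : u ^ n = 1) : (u ^ k) ^ n = 1 := by rw [pow_right_comm, hu, one_pow]
  simp only [Set.BijOn, Set.MapsTo, Set.InjOn, Set.SurjOn, Set.subset_def, Set.mem_image,
    mem_coe, mem_nthRootPairs hn, Prod.forall, Prod.exists, Prod.map, Prod.mk.injEq]
  refine ⟨?_, ?_, ?_⟩
  · rintro u v ⟨⟨hu1, hu⟩, ⟨hv1, hv⟩, huv⟩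
    refine ⟨⟨fun h => hu1 (inj hu (one_pow n) (h.trans (one_pow k).symm)), hpow hu⟩,
      ⟨fun h => hv1 (inj hv (one_pow n) (h.trans (one_pow k).symm)), hpow hv⟩,
      fun h => huv (inj hu hv h)⟩
  · rintro u v ⟨⟨-, hu⟩, ⟨-, hv⟩, -⟩ u' v' ⟨⟨-, hu'⟩, ⟨-, hv'⟩, -⟩ ⟨h1, h2⟩
    exact ⟨inj hu hu' h1, inj hv hv' h2⟩
  · rintro a c ⟨⟨ha1, ha⟩, ⟨hc1, hc⟩, hac⟩
    obtain ⟨u, hu, rfl⟩ := exists_pow_eq_of_coprime hk ha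
    obtain ⟨v, hv, rfl⟩ := exists_pow_eq_of_coprime hk hc
    refine ⟨u, v, ⟨⟨?_, hu⟩, ⟨?_, hv⟩, ?_⟩, rfl, rfl⟩
    · rintro rfl; exact ha1 (one_pow k)
    · rintro rfl; exact hc1 (one_pow k)
    · rintro rfl; exact hac rfl

end RootPairs

section SumsOfRootPairs

variable {K : Type*} [Field K] [DecidableEq K] [CharP K 2] {m : ℕ}

theorem card_filter_add_nthRootPairs (b : K) :
    #{p ∈ nthRootPairs K (2 ^ m + 1) | p.1 + p.2 = b} =
      if b ∈ (nthRootPairs K (2 ^ m + 1)).image (fun p => p.1 + p.2) then 2 else 0 := by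
  split_ifs with hb
  · obtain ⟨⟨a, c⟩, hD, rfl⟩ := mem_image.mp hb
    obtain ⟨⟨-, ha⟩, ⟨-, hc⟩, hac⟩ := (mem_nthRootPairs (Nat.add_one_pos _)).mp hD
    suffices {p ∈ nthRootPairs K (2 ^ m + 1) | p.1 + p.2 = a + c} = {(a, c), (c, a)} by
      rw [this, card_pair (fun h => hac (Prod.mk.inj h).1)]
    ext ⟨a', c'⟩
    simp only [mem_filter, mem_insert, mem_singleton, Prod.mk.injEq]
    constructor
    · rintro ⟨hD', hsum⟩
      obtain ⟨⟨-, ha'⟩, ⟨-, hc'⟩, -⟩ := (mem_nthRootPairs (Nat.add_one_pos _)).mp hD'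
      by_cases ha'a : a' = a
      · subst ha'a
        exact Or.inl ⟨rfl, add_left_cancel hsum⟩
      · refine Or.inr (eq_and_eq_of_add_eq_add ha hc ha' hc' hac
          (mt CharTwo.add_eq_zero.mp (Ne.symm ha'a)) ?_)
        linear_combination -hsum + (a' - c) * CharTwo.two_eq_zero (R := K)
    · rintro (⟨rfl, rfl⟩ | ⟨rfl, rfl⟩)
      · exact ⟨hD, rfl⟩
      · exact ⟨swap_mem_nthRootPairs hD, add_comm _ _⟩
  · exact card_eq_zero.mpr <|
      filter_eq_empty_iff.mpr fun p hp hsum => hb (mem_image.mpr ⟨p, hp, hsum⟩)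

theorem two_mul_card_image_add_nthRootPairs :
    2 * #((nthRootPairs K (2 ^ m + 1)).image fun p => p.1 + p.2) =
      #(nthRootPairs K (2 ^ m + 1)) := by
  rw [card_eq_sum_card_image (fun p : K × K => p.1 + p.2) (nthRootPairs K _),
    sum_congr rfl fun b hb => by rw [card_filter_add_nthRootPairs, if_pos hb], sum_const,
    smul_eq_mul, mul_comm]

theorem one_notMem_image_add_nthRootPairs (hm : Even m) :
    (1 : K) ∉ (nthRootPairs K (2 ^ m + 1)).image fun p => p.1 + p.2 := by
  rintro hb
  obtain ⟨⟨a, c⟩, hD, hsum⟩ := mem_image.mp hb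
  obtain ⟨⟨-, ha⟩, ⟨-, hc⟩, -⟩ := (mem_nthRootPairs (Nat.add_one_pos _)).mp hD
  refine add_one_pow_ne_one_of_pow_eq_one hm ha ?_
  rwa [show a + 1 = c by rw [← hsum]; exact CharTwo.add_cancel_left a c]

theorem zero_notMem_image_add_nthRootPairs :
    (0 : K) ∉ (nthRootPairs K (2 ^ m + 1)).image fun p => p.1 + p.2 := by
  rintro hb
  obtain ⟨⟨a, c⟩, hD, hsum⟩ := mem_image.mp hb
  exact ((mem_nthRootPairs (Nat.add_one_pos _)).mp hD).2.2 (CharTwo.add_eq_zero.mp hsum)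

theorem card_image_add_nthRootPairs [Fintype K] (hK : Fintype.card K = (2 ^ m) ^ 2) (hm : 0 < m) :
    #((nthRootPairs K (2 ^ m + 1)).image fun p => p.1 + p.2) = 2 ^ (2 * m - 1) - 2 ^ (m - 1) := by
  have h := two_mul_card_image_add_nthRootPairs (K := K) (m := m)
  rw [FiniteField.card_nthRootPairs ⟨2 ^ m - 1, by rw [hK, ← one_pow 2, Nat.sq_sub_sq, one_pow]⟩,
    Nat.add_sub_cancel] at h
  have e1 : 2 ^ (2 * m - 1) * 2 = 2 ^ m * 2 ^ m := by rw [← pow_succ, ← pow_add]; congr 1; omega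
  have e2 : 2 ^ (m - 1) * 2 = 2 ^ m := by rw [← pow_succ]; congr 1; omega
  have e3 : 2 ^ m ≤ 2 ^ m * 2 ^ m := Nat.le_mul_of_pos_left _ (by positivity)
  omega

end SumsOfRootPairs

section Parametrization

variable {K : Type*} [Field K] [Fintype K] [DecidableEq K] [CharP K 2] {m : ℕ}

theorem pow_sub_one_mem_nthRootPairs (hK : Fintype.card K = (2 ^ m) ^ 2) {x : K}
    (hx : x ^ 2 ^ m ≠ x) :
    (x ^ (2 ^ m - 1), (x + 1) ^ (2 ^ m - 1)) ∈ nthRootPairs K (2 ^ m + 1) := by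
  have hq : 2 ^ m ≠ 0 := by positivity
  have hx0 : x ≠ 0 := by rintro rfl; simp at hx
  have hx1 : x + 1 ≠ 0 := by rw [Ne, CharTwo.add_eq_zero]; rintro rfl; simp at hx
  have hv1 : (x + 1) ^ (2 ^ m - 1) ≠ 1 := fun h => hx <| by
    rw [← pow_eq_mul_iff_pow_sub_one_eq hq hx1, one_mul, add_one_pow_two_pow] at h
    exact add_right_cancel h
  refine (mem_nthRootPairs (Nat.add_one_pos _)).mpr
    ⟨⟨fun h => hx ?_, FiniteField.pow_sub_one_pow_add_one_eq_one hK hx0⟩,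
      ⟨hv1, FiniteField.pow_sub_one_pow_add_one_eq_one hK hx1⟩, fun h => hv1 ?_⟩
  · rwa [← pow_eq_mul_iff_pow_sub_one_eq hq hx0, one_mul] at h
  · have := mul_pow_sub_one_add_add_one_pow_sub_one (m := m) x
    rwa [h, CharTwo.add_self_eq_zero, mul_zero, eq_comm, CharTwo.add_eq_zero] at this

theorem bijOn_pow_sub_one (hK : Fintype.card K = (2 ^ m) ^ 2) :
    Set.BijOn (fun x : K => (x ^ (2 ^ m - 1), (x + 1) ^ (2 ^ m - 1))) {x | x ^ 2 ^ m ≠ x}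
      (nthRootPairs K (2 ^ m + 1)) := by
  refine ⟨fun x hx => pow_sub_one_mem_nthRootPairs hK hx, fun x hx y hy h => ?_, ?_⟩
  · obtain ⟨hu, hv⟩ := Prod.mk.inj h
    have huv := ((mem_nthRootPairs (Nat.add_one_pos _)).mp (pow_sub_one_mem_nthRootPairs hK hx)).2.2
    refine mul_right_cancel₀ (mt CharTwo.add_eq_zero.mp huv) ?_
    rw [mul_pow_sub_one_add_add_one_pow_sub_one, hu, hv, mul_pow_sub_one_add_add_one_pow_sub_one]
  · rintro ⟨u, v⟩ huv
    obtain ⟨⟨hu1, hu⟩, ⟨hv1, hv⟩, huv⟩ := (mem_nthRootPairs (Nat.add_one_pos _)).mp huv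
    obtain ⟨x, hx, rfl, rfl⟩ := exists_pow_sub_one_eq hu hv hu1 hv1 huv
    exact ⟨x, hx, rfl⟩

end Parametrization

def boomerangSolutions {R : Type*} [Fintype R] [DecidableEq R] [Add R] [One R] (f : R → R)
    (b : R) : Finset (R × R) :=
  univ.filter fun xy => f xy.1 + f xy.2 = b ∧ f (xy.1 + 1) + f (xy.2 + 1) = b

theorem mem_boomerangSolutions {R : Type*} [Fintype R] [DecidableEq R] [Add R] [One R]
    {f : R → R} {b x y : R} :
    (x, y) ∈ boomerangSolutions f b ↔ f x + f y = b ∧ f (x + 1) + f (y + 1) = b := by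
  simp [boomerangSolutions]

section Boomerang

variable {K : Type*} [Field K] [Fintype K] [DecidableEq K] [CharP K 2] {m k : ℕ}

theorem bijOn_pow_mul_sub_one (hK : Fintype.card K = (2 ^ m) ^ 2) (hk : k.Coprime (2 ^ m + 1)) :
    Set.BijOn (fun x : K => (x ^ (k * (2 ^ m - 1)), (x + 1) ^ (k * (2 ^ m - 1))))
      {x | x ^ 2 ^ m ≠ x} (nthRootPairs K (2 ^ m + 1)) := by
  simp_rw [pow_mul']
  exact (bijOn_prodMap_pow_nthRootPairs (Nat.add_one_pos _) hk).comp (bijOn_pow_sub_one hK)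

theorem pow_two_pow_eq_self_iff (hK : Fintype.card K = (2 ^ m) ^ 2) (hm : Even m)
    (hk : k.Coprime (2 ^ m + 1)) {x : K} :
    x ^ 2 ^ m = x ↔ x ^ (k * (2 ^ m - 1)) + (x + 1) ^ (k * (2 ^ m - 1)) = 0 ∨
      x ^ (k * (2 ^ m - 1)) + (x + 1) ^ (k * (2 ^ m - 1)) = 1 := by
  constructor
  · intro hx
    rw [pow_mul_sub_one_of_pow_two_pow_eq_self hK hk hx,
      pow_mul_sub_one_of_pow_two_pow_eq_self hK hk (by rw [add_one_pow_two_pow, hx])]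
    by_cases hx0 : x = 0
    · simp [hx0]
    by_cases hx1 : x = 1
    · simp [hx1, CharTwo.add_self_eq_zero]
    · simp [hx0, mt CharTwo.add_eq_zero.mp hx1, CharTwo.add_self_eq_zero]
  · contrapose!
    intro hx
    obtain ⟨⟨-, ha⟩, ⟨-, hc⟩, hac⟩ :=
      (mem_nthRootPairs (Nat.add_one_pos _)).mp ((bijOn_pow_mul_sub_one hK hk).mapsTo hx)
    refine ⟨mt CharTwo.add_eq_zero.mp hac, fun h => add_one_pow_ne_one_of_pow_eq_one hm ha ?_⟩
    rwa [show x ^ (k * (2 ^ m - 1)) + 1 = (x + 1) ^ (k * (2 ^ m - 1)) by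
      linear_combination h + (1 - (x + 1) ^ (k * (2 ^ m - 1))) * CharTwo.two_eq_zero (R := K)]

theorem pow_two_pow_eq_self_iff_of_mem_boomerangSolutions (hK : Fintype.card K = (2 ^ m) ^ 2)
    (hm : Even m) (hk : k.Coprime (2 ^ m + 1)) {b x y : K}
    (h : (x, y) ∈ boomerangSolutions (· ^ (k * (2 ^ m - 1))) b) :
    x ^ 2 ^ m = x ↔ y ^ 2 ^ m = y := by
  obtain ⟨h1, h2⟩ := mem_boomerangSolutions.mp h
  have : x ^ (k * (2 ^ m - 1)) + (x + 1) ^ (k * (2 ^ m - 1)) =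
      y ^ (k * (2 ^ m - 1)) + (y + 1) ^ (k * (2 ^ m - 1)) := by
    linear_combination h1 - h2 + ((x + 1) ^ (k * (2 ^ m - 1)) - y ^ (k * (2 ^ m - 1))) *
      CharTwo.two_eq_zero (R := K)
  rw [pow_two_pow_eq_self_iff hK hm hk, pow_two_pow_eq_self_iff hK hm hk, this]

theorem eq_one_of_mem_boomerangSolutions_of_pow_two_pow_eq_self
    (hK : Fintype.card K = (2 ^ m) ^ 2) (hk : k.Coprime (2 ^ m + 1)) {b x y : K} (hb : b ≠ 0)
    (h : (x, y) ∈ boomerangSolutions (· ^ (k * (2 ^ m - 1))) b) (hx : x ^ 2 ^ m = x)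
    (hy : y ^ 2 ^ m = y) : b = 1 ∧ (x = 0 ∧ y = 1 ∨ x = 1 ∧ y = 0) := by
  obtain ⟨h1, h2⟩ := mem_boomerangSolutions.mp h
  rw [pow_mul_sub_one_of_pow_two_pow_eq_self hK hk hx,
    pow_mul_sub_one_of_pow_two_pow_eq_self hK hk hy] at h1
  rw [pow_mul_sub_one_of_pow_two_pow_eq_self hK hk (by rw [add_one_pow_two_pow, hx]),
    pow_mul_sub_one_of_pow_two_pow_eq_self hK hk (by rw [add_one_pow_two_pow, hy])] at h2
  simp only [CharTwo.add_eq_zero] at h2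
  subst h1
  rcases eq_or_ne x 0 with rfl | hx0 <;> rcases eq_or_ne y 0 with rfl | hy0 <;>
    simp_all [CharTwo.add_self_eq_zero]

theorem pow_eq_add_one_pow_of_mem_boomerangSolutions (hK : Fintype.card K = (2 ^ m) ^ 2)
    (hk : k.Coprime (2 ^ m + 1)) {b x y : K} (hb : b ≠ 0)
    (h : (x, y) ∈ boomerangSolutions (· ^ (k * (2 ^ m - 1))) b) (hx : x ^ 2 ^ m ≠ x)
    (hy : y ^ 2 ^ m ≠ y) :
    y ^ (k * (2 ^ m - 1)) = (x + 1) ^ (k * (2 ^ m - 1)) ∧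
      (y + 1) ^ (k * (2 ^ m - 1)) = x ^ (k * (2 ^ m - 1)) := by
  obtain ⟨h1, h2⟩ := mem_boomerangSolutions.mp h
  obtain ⟨⟨-, ha⟩, ⟨-, hc⟩, hac⟩ :=
    (mem_nthRootPairs (Nat.add_one_pos _)).mp ((bijOn_pow_mul_sub_one hK hk).mapsTo hx)
  obtain ⟨⟨-, ha'⟩, ⟨-, hc'⟩, -⟩ :=
    (mem_nthRootPairs (Nat.add_one_pos _)).mp ((bijOn_pow_mul_sub_one hK hk).mapsTo hy)
  exact eq_and_eq_of_add_eq_add ha hc ha' hc' hac (h1 ▸ hb) (h1.trans h2.symm)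

theorem boomerangSolutions_one (hK : Fintype.card K = (2 ^ m) ^ 2) (hm : Even m)
    (hk : k.Coprime (2 ^ m + 1)) :
    boomerangSolutions (· ^ (k * (2 ^ m - 1))) (1 : K) = {(0, 1), (1, 0)} := by
  have h0 : (0 : K) ^ (k * (2 ^ m - 1)) = 0 := by
    simpa using pow_mul_sub_one_of_pow_two_pow_eq_self hK hk (x := (0 : K)) (by simp)
  ext ⟨x, y⟩
  simp only [mem_insert, mem_singleton, Prod.mk.injEq]
  constructor
  · intro h
    by_cases hx : x ^ 2 ^ m = x
    · exact (eq_one_of_mem_boomerangSolutions_of_pow_two_pow_eq_self hK hk one_ne_zero h hx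
        ((pow_two_pow_eq_self_iff_of_mem_boomerangSolutions hK hm hk h).mp hx)).2
    · have hy := mt (pow_two_pow_eq_self_iff_of_mem_boomerangSolutions hK hm hk h).mpr hx
      obtain ⟨hxy, -⟩ := pow_eq_add_one_pow_of_mem_boomerangSolutions hK hk one_ne_zero h hx hy
      refine absurd (Or.inr ?_) (mt (pow_two_pow_eq_self_iff hK hm hk).mpr hx)
      rw [← hxy]
      exact (mem_boomerangSolutions.mp h).1
  · rintro (⟨rfl, rfl⟩ | ⟨rfl, rfl⟩) <;> simp [mem_boomerangSolutions, h0, CharTwo.add_self_eq_zero]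

theorem card_boomerangSolutions_eq_card_filter (hK : Fintype.card K = (2 ^ m) ^ 2) (hm : Even m)
    (hk : k.Coprime (2 ^ m + 1)) {b : K} (hb0 : b ≠ 0) (hb1 : b ≠ 1) :
    #(boomerangSolutions (· ^ (k * (2 ^ m - 1))) b) =
      #{p ∈ nthRootPairs K (2 ^ m + 1) | p.1 + p.2 = b} := by
  have hφ := bijOn_pow_mul_sub_one hK hk
  have outside {x y : K} (h : (x, y) ∈ boomerangSolutions (· ^ (k * (2 ^ m - 1))) b) :
      x ^ 2 ^ m ≠ x ∧ y ^ 2 ^ m ≠ y := by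
    have hiff := pow_two_pow_eq_self_iff_of_mem_boomerangSolutions hK hm hk h
    have hx : x ^ 2 ^ m ≠ x := fun hx => hb1
      (eq_one_of_mem_boomerangSolutions_of_pow_two_pow_eq_self hK hk hb0 h hx (hiff.mp hx)).1
    exact ⟨hx, mt hiff.mpr hx⟩
  refine card_nbij (fun xy => (xy.1 ^ (k * (2 ^ m - 1)), (xy.1 + 1) ^ (k * (2 ^ m - 1))))
    ?_ ?_ ?_
  · rintro ⟨x, y⟩ h
    obtain ⟨hx, hy⟩ := outside h
    obtain ⟨hxy, -⟩ := pow_eq_add_one_pow_of_mem_boomerangSolutions hK hk hb0 h hx hy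
    refine mem_filter.mpr ⟨hφ.mapsTo hx, ?_⟩
    dsimp only
    rw [← hxy]
    exact (mem_boomerangSolutions.mp h).1
  · rintro ⟨x, y⟩ h ⟨x', y'⟩ h' hxx'
    obtain ⟨hx, hy⟩ := outside h
    obtain ⟨hx', hy'⟩ := outside h'
    obtain ⟨hy1, hy2⟩ := pow_eq_add_one_pow_of_mem_boomerangSolutions hK hk hb0 h hx hy
    obtain ⟨hy1', hy2'⟩ := pow_eq_add_one_pow_of_mem_boomerangSolutions hK hk hb0 h' hx' hy'
    obtain ⟨e1, e2⟩ := Prod.mk.inj hxx'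
    refine Prod.ext (hφ.injOn hx hx' hxx') (hφ.injOn hy hy' ?_)
    dsimp only
    rw [hy1, hy2, hy1', hy2', e1, e2]
  · rintro ⟨a, c⟩ hac
    obtain ⟨hD, hsum⟩ := mem_filter.mp hac
    obtain ⟨x, hx, hxac⟩ := hφ.surjOn hD
    obtain ⟨y, hy, hyca⟩ := hφ.surjOn (swap_mem_nthRootPairs hD)
    obtain ⟨rfl, rfl⟩ := Prod.mk.inj hxac
    obtain ⟨h1, h2⟩ := Prod.mk.inj hyca
    refine ⟨(x, y), mem_boomerangSolutions.mpr ⟨?_, ?_⟩, rfl⟩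
    · rw [h1]; exact hsum
    · rw [h2, add_comm]; exact hsum

theorem card_boomerangSolutions (hK : Fintype.card K = (2 ^ m) ^ 2) (hm : Even m)
    (hk : k.Coprime (2 ^ m + 1)) {b : K} (hb : b ≠ 0) :
    #(boomerangSolutions (· ^ (k * (2 ^ m - 1))) b) =
      if b ∈ insert 1 ((nthRootPairs K (2 ^ m + 1)).image fun p => p.1 + p.2) then 2 else 0 := by
  rcases eq_or_ne b 1 with rfl | hb1
  · rw [boomerangSolutions_one hK hm hk, card_pair (by simp), if_pos (mem_insert_self _ _)]
  · simp only [card_boomerangSolutions_eq_card_filter hK hm hk hb hb1,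
      card_filter_add_nthRootPairs, mem_insert, hb1, false_or]

end Boomerang

theorem stmt_12_general (m q k : ℕ) (hm : 0 < m) (hmeven : Even m) (hq : q = 2 ^ m)
    (hgcd : Nat.gcd k (q + 1) = 1)
    (K : Type*) [Field K] [Fintype K] [DecidableEq K] (hcard : Fintype.card K = q ^ 2)
    (β : K → ℕ)
    (hβ : ∀ b : K, β b = (Finset.univ.filter (fun xy : K × K =>
        xy.1 ^ (k * (q - 1)) + xy.2 ^ (k * (q - 1)) = b ∧
        (xy.1 + 1) ^ (k * (q - 1)) + (xy.2 + 1) ^ (k * (q - 1)) = b)).card) :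
    (∀ b : K, b ≠ 0 → β b = 0 ∨ β b = 2) ∧
    (Finset.univ.filter (fun b : K => b ≠ 0 ∧ β b = 2)).card
      = 2 ^ (2 * m - 1) - 2 ^ (m - 1) + 1 := by
  subst hq
  have : CharP K 2 := charP_of_card_eq_prime_pow (f := 2 * m) (by rw [hcard, ← pow_mul, mul_comm])
  set S := insert 1 ((nthRootPairs K (2 ^ m + 1)).image fun p => p.1 + p.2)
  have hβS {b : K} (hb : b ≠ 0) : β b = if b ∈ S then 2 else 0 :=
    (hβ b).trans (card_boomerangSolutions hcard hmeven hgcd hb)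
  refine ⟨fun b hb => by rw [hβS hb]; split_ifs <;> simp, ?_⟩
  have hset : ({b | b ≠ 0 ∧ β b = 2} : Finset K) = S := by
    ext b
    rcases eq_or_ne b 0 with rfl | hb
    · simpa [S] using zero_notMem_image_add_nthRootPairs (K := K) (m := m)
    · simp [hb, hβS hb]
  rw [hset, card_insert_of_notMem (one_notMem_image_add_nthRootPairs hmeven),
    card_image_add_nthRootPairs hcard hm]

/-- Let `q = 2^m` with `m` even, `k > 0` with `gcd(k, q+1) = 1`, `K` the field with
`q^2` elements and `F x = x^(k(q-1))`. Then the boomerang uniformity of `F` is `2`: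
for every `b ≠ 0` the system `F(x)+F(y) = b`, `F(x+1)+F(y+1) = b` has either `0` or
`2` solutions `(x,y)`, and exactly `2` solutions for exactly
`2^(2m-1) - 2^(m-1) + 1` values of `b`. -/
theorem stmt_12 (m q k : ℕ) (hm : 0 < m) (hmeven : Even m) (hq : q = 2 ^ m)
    (hk : 0 < k) (hgcd : Nat.gcd k (q + 1) = 1)
    (K : Type*) [Field K] [Fintype K] [DecidableEq K] (hcard : Fintype.card K = q ^ 2)
    (β : K → ℕ)
    (hβ : ∀ b : K, β b = (Finset.univ.filter (fun xy : K × K =>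
        xy.1 ^ (k * (q - 1)) + xy.2 ^ (k * (q - 1)) = b ∧
        (xy.1 + 1) ^ (k * (q - 1)) + (xy.2 + 1) ^ (k * (q - 1)) = b)).card) :
    (∀ b : K, b ≠ 0 → β b = 0 ∨ β b = 2) ∧
    (Finset.univ.filter (fun b : K => b ≠ 0 ∧ β b = 2)).card
      = 2 ^ (2 * m - 1) - 2 ^ (m - 1) + 1 :=
  stmt_12_general m q k hm hmeven hq hgcd K hcard β hβ
end
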